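/- arXiv:2309.00421 — 4 statements merged into one kernel-verified Lean document; each statement's English description precedes it below -/
import Mathlib

section
/- Let M = [[a,b],[c,d]] and M' = [[a,b],[r,d']] both have determinant ±1, where 0 ≤ r ≤ |c| and a ≠ 0. Then |d'| ≤ |d| + 2. -/
/-! The two determinant conditions give `|a| |d'| ≤ |b| r + 1 ≤ |b| |c| + 1 ≤ |a| |d| + 2`, and
dividing by `|a|` loses nothing because a nonzero integer has `|a| ≥ 1`. -/

theorem abs_mul_abs_le_add_two_of_abs_det_eq_one {α : Type*} [CommRing α] [LinearOrder α]
    [IsStrictOrderedRing α] {a b c d d' r : α} (hdet : |a * d - b * c| = 1)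
    (hdet' : |a * d' - b * r| = 1) (hrc : |r| ≤ |c|) :
    |a| * |d'| ≤ |a| * |d| + 2 := by
  have hbr : |b| * |r| ≤ |b| * |c| := mul_le_mul_of_nonneg_left hrc (abs_nonneg b)
  have h₁ := abs_sub_abs_le_abs_sub (a * d') (b * r)
  have h₂ := abs_sub_abs_le_abs_sub (b * c) (a * d)
  rw [abs_sub_comm, hdet] at h₂
  rw [hdet'] at h₁
  simp only [abs_mul] at h₁ h₂
  linarith

theorem Int.le_add_of_mul_le_mul_add {a x y k : ℤ} (ha : 0 < a) (hk : 0 ≤ k)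
    (h : a * x ≤ a * y + k) : x ≤ y + k := by
  nlinarith

theorem second_column_bound (a b c d d' r : ℤ)
    (hdet : a * d - b * c = 1 ∨ a * d - b * c = -1)
    (hdet' : a * d' - b * r = 1 ∨ a * d' - b * r = -1)
    (hr0 : 0 ≤ r) (hrc : r ≤ |c|) (ha : a ≠ 0) :
    |d'| ≤ |d| + 2 := by
  have hrc' : |r| ≤ |c| := by rwa [abs_of_nonneg hr0]
  refine Int.le_add_of_mul_le_mul_add (abs_pos.mpr ha) zero_le_two ?_
  exact abs_mul_abs_le_add_two_of_abs_det_eq_one ((abs_eq zero_le_one).2 hdet)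
    ((abs_eq zero_le_one).2 hdet') hrc'
end

section
/- Every element of GL(2,ℤ) with matrix entries a,b,c,d can be written as a product of matrices from {A, B, C, A⁻¹, B⁻¹, C⁻¹} of length at most K·(|a|+|b|+|c|+|d|) + K for some absolute constant K, where A = [[1,-1],[0,-1]], B = [[1,0],[0,-1]], C = [[0,1],[1,0]]. -/
/-!
Left multiplication by `A * B = !![1, 1; 0, 1]`, `B * A = !![1, -1; 0, 1]` and their conjugates
by `C` performs the row operations `r₁ ± r₂`, `r₂ ± r₁`. For a unimodular integer matrix the
entries of the two rows have compatible signs, so unless the matrix is a signed permutation matrix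
one of these operations lowers the ℓ¹-norm `|a| + |b| + |c| + |d|` by at least one. Each step costs
at most four letters, and the signed permutation matrices are words of length at most five.
-/

open Matrix

def WordLengthLE {M : Type*} [Monoid M] (S : Set M) (g : M) (n : ℕ) : Prop :=
  ∃ L : List M, (∀ x ∈ L, x ∈ S) ∧ L.prod = g ∧ L.length ≤ n

namespace WordLengthLE

variable {M : Type*} [Monoid M] {S : Set M} {g h : M} {m n : ℕ}

lemma of_mem (hg : g ∈ S) : WordLengthLE S g 1 :=
  ⟨[g], by simpa, by simp, le_rfl⟩

lemma mono (hg : WordLengthLE S g m) (hmn : m ≤ n) : WordLengthLE S g n :=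
  let ⟨L, hL, hprod, hlen⟩ := hg
  ⟨L, hL, hprod, hlen.trans hmn⟩

lemma mul (hg : WordLengthLE S g m) (hh : WordLengthLE S h n) :
    WordLengthLE S (g * h) (m + n) := by
  obtain ⟨L₁, hL₁, rfl, hlen₁⟩ := hg
  obtain ⟨L₂, hL₂, rfl, hlen₂⟩ := hh
  refine ⟨L₁ ++ L₂, ?_, List.prod_append, ?_⟩
  · simpa [or_imp, forall_and] using ⟨hL₁, hL₂⟩
  · rw [List.length_append]
    omega

end WordLengthLE

lemma abs_sub_eq_abs_abs_sub_abs_of_mul_nonneg {α : Type*} [Ring α] [LinearOrder α]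
    [IsStrictOrderedRing α] {x y : α} (h : 0 ≤ x * y) : |x - y| = |(|x| - |y|)| := by
  rcases mul_nonneg_iff.mp h with ⟨hx, hy⟩ | ⟨hx, hy⟩
  · rw [abs_of_nonneg hx, abs_of_nonneg hy]
  · rw [abs_of_nonpos hx, abs_of_nonpos hy, ← abs_neg, neg_sub, neg_sub_neg]

lemma exists_sign_mul_nonneg_of_mul_nonneg {p q : ℤ} (h : 0 ≤ p * q) :
    ∃ ε : ℤ, (ε = 1 ∨ ε = -1) ∧ 0 ≤ ε * p ∧ 0 ≤ ε * q := by
  rcases le_or_gt 0 p with hp | hp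
  · rcases le_or_gt 0 q with hq | hq
    · exact ⟨1, .inl rfl, by linarith, by linarith⟩
    · exact ⟨-1, .inr rfl, by linarith [nonpos_of_mul_nonneg_left h hq], by linarith⟩
  · exact ⟨-1, .inr rfl, by linarith, by linarith [nonpos_of_mul_nonneg_right h hp]⟩

lemma lt_two_mul_add_of_abs_mul_sub_mul_eq_one {x y z w : ℤ} (hx : 0 ≤ x) (hy : 0 ≤ y)
    (hz : 0 ≤ z) (hw : 0 ≤ w) (hdet : |x * w - y * z| = 1) (hle : z + w ≤ x + y)
    (htwo : 2 ≤ x + y) : w < 2 * y + z := by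
  -- otherwise `x ≥ y + 2 * z`, so `x * w - y * z ≥ 2 * (y + z) ^ 2`
  by_contra! h
  have hx' : y + 2 * z ≤ x := by linarith
  have h1 : x * w - y * z ≤ 1 := (abs_le.mp hdet.le).2
  have h3 : (y + 2 * z) * (2 * y + z) ≤ x * w := mul_le_mul hx' h (by positivity) (by positivity)
  obtain ⟨rfl, rfl⟩ : y = 0 ∧ z = 0 := by constructor <;> nlinarith
  rw [mul_zero, sub_zero, abs_of_nonneg (by positivity)] at hdet
  have := Int.eq_one_of_mul_eq_one_right hx hdet
  omega

lemma abs_sub_add_abs_sub_lt {x y z w : ℤ} (hx : 0 ≤ x) (hy : 0 ≤ y) (hz : 0 ≤ z) (hw : 0 ≤ w)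
    (hdet : |x * w - y * z| = 1) (hle : z + w ≤ x + y) (htwo : 2 ≤ x + y) :
    |x - z| + |y - w| < x + y := by
  have hw' := lt_two_mul_add_of_abs_mul_sub_mul_eq_one hx hy hz hw hdet hle htwo
  have hz' : z < 2 * x + w := lt_two_mul_add_of_abs_mul_sub_mul_eq_one hy hx hw hz
    (by rwa [abs_sub_comm]) (by linarith) (by linarith)
  have hzw : z + w ≠ 0 := by
    rintro hzw
    obtain ⟨rfl, rfl⟩ : z = 0 ∧ w = 0 := by omega
    simp at hdet
  rcases abs_cases (x - z) with ⟨h1, _⟩ | ⟨h1, _⟩ <;>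
    rcases abs_cases (y - w) with ⟨h2, _⟩ | ⟨h2, _⟩ <;> omega

lemma exists_abs_sub_add_abs_sub_lt {a b c d : ℤ} (hdet : |a * d - b * c| = 1)
    (hle : |c| + |d| ≤ |a| + |b|) (htwo : 2 ≤ |a| + |b|) :
    ∃ ε : ℤ, (ε = 1 ∨ ε = -1) ∧ |a - ε * c| + |b - ε * d| < |a| + |b| := by
  -- `(a * d - b * c) ^ 2 = 1` forbids `a * d` and `b * c` of strictly opposite signs
  have hsign : 0 ≤ a * c * (b * d) := by
    have h := sq_abs (a * d - b * c)
    rw [hdet] at h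
    nlinarith [sq_nonneg (a * d), sq_nonneg (b * c)]
  obtain ⟨ε, hε, hac, hbd⟩ := exists_sign_mul_nonneg_of_mul_nonneg hsign
  have habs : |ε| = 1 := by rcases hε with rfl | rfl <;> rfl
  have hac' : |a - ε * c| = |(|a| - |c|)| := by
    rw [abs_sub_eq_abs_abs_sub_abs_of_mul_nonneg (by linarith [mul_left_comm a ε c]), abs_mul,
      habs, one_mul]
  have hbd' : |b - ε * d| = |(|b| - |d|)| := by
    rw [abs_sub_eq_abs_abs_sub_abs_of_mul_nonneg (by linarith [mul_left_comm b ε d]), abs_mul,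
      habs, one_mul]
  have hdet' : |(|a| * |d| - |b| * |c|)| = 1 := by
    have hadbc : 0 ≤ a * d * (b * c) := by convert hsign using 1; ring
    rwa [← abs_mul, ← abs_mul, ← abs_sub_eq_abs_abs_sub_abs_of_mul_nonneg hadbc]
  refine ⟨ε, hε, ?_⟩
  rw [hac', hbd']
  exact abs_sub_add_abs_sub_lt (abs_nonneg _) (abs_nonneg _) (abs_nonneg _) (abs_nonneg _) hdet'
    hle htwo


def gl2A : Matrix (Fin 2) (Fin 2) ℤ := !![1, -1; 0, -1]
def gl2B : Matrix (Fin 2) (Fin 2) ℤ := !![1, 0; 0, -1]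
def gl2C : Matrix (Fin 2) (Fin 2) ℤ := !![0, 1; 1, 0]

def gl2Generators : Set (Matrix (Fin 2) (Fin 2) ℤ) := {gl2A, gl2B, gl2C}

lemma wordLengthLE_upperShear {ε : ℤ} (hε : ε = 1 ∨ ε = -1) :
    WordLengthLE gl2Generators !![1, ε; 0, 1] 2 := by
  rcases hε with rfl | rfl
  · exact ⟨[gl2A, gl2B], by simp [gl2Generators], by decide, le_rfl⟩
  · exact ⟨[gl2B, gl2A], by simp [gl2Generators], by decide, le_rfl⟩

lemma wordLengthLE_lowerShear {ε : ℤ} (hε : ε = 1 ∨ ε = -1) :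
    WordLengthLE gl2Generators !![1, 0; ε, 1] 4 := by
  rcases hε with rfl | rfl
  · exact ⟨[gl2C, gl2A, gl2B, gl2C], by simp [gl2Generators], by decide, le_rfl⟩
  · exact ⟨[gl2C, gl2B, gl2A, gl2C], by simp [gl2Generators], by decide, le_rfl⟩

lemma wordLengthLE_diagonal {a d : ℤ} (ha : a = 1 ∨ a = -1) (hd : d = 1 ∨ d = -1) :
    WordLengthLE gl2Generators !![a, 0; 0, d] 4 := by
  rcases ha with rfl | rfl <;> rcases hd with rfl | rfl
  · exact ⟨[], by simp, by decide, by simp⟩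
  · exact ⟨[gl2B], by simp [gl2Generators], by decide, by simp⟩
  · exact ⟨[gl2C, gl2B, gl2C], by simp [gl2Generators], by decide, by simp⟩
  · exact ⟨[gl2B, gl2C, gl2B, gl2C], by simp [gl2Generators], by decide, le_rfl⟩

lemma wordLengthLE_antidiagonal {b c : ℤ} (hb : b = 1 ∨ b = -1) (hc : c = 1 ∨ c = -1) :
    WordLengthLE gl2Generators !![0, b; c, 0] 5 := by
  have h : !![0, b; c, 0] = gl2C * !![c, 0; 0, b] := by simp [gl2C]
  rw [h]
  exact (WordLengthLE.of_mem (by simp [gl2Generators])).mul (wordLengthLE_diagonal hc hb)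

lemma wordLengthLE_of_sum_abs_le_two {a b c d : ℤ} (hdet : |a * d - b * c| = 1)
    (hsum : |a| + |b| + |c| + |d| ≤ 2) : WordLengthLE gl2Generators !![a, b; c, d] 5 := by
  rcases eq_or_ne (b * c) 0 with hbc | hbc
  · have had : |a| * |d| = 1 := by rwa [hbc, sub_zero, abs_mul] at hdet
    have ha := Int.eq_one_of_mul_eq_one_right (abs_nonneg a) had
    have hd := Int.eq_one_of_mul_eq_one_left (abs_nonneg d) had
    obtain ⟨rfl, rfl⟩ : b = 0 ∧ c = 0 := by
      simp only [← Int.natCast_natAbs] at hsum ha hd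
      omega
    exact (wordLengthLE_diagonal ((abs_eq zero_le_one).mp ha) ((abs_eq zero_le_one).mp hd)).mono
      (by norm_num)
  · have hb := Int.one_le_abs (left_ne_zero_of_mul hbc)
    have hc := Int.one_le_abs (right_ne_zero_of_mul hbc)
    simp only [← Int.natCast_natAbs] at hsum hb hc
    obtain ⟨rfl, rfl⟩ : a = 0 ∧ d = 0 := by omega
    have hb1 : |b| = 1 := by rw [← Int.natCast_natAbs]; omega
    have hc1 : |c| = 1 := by rw [← Int.natCast_natAbs]; omega
    exact wordLengthLE_antidiagonal ((abs_eq zero_le_one).mp hb1) ((abs_eq zero_le_one).mp hc1)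

theorem wordLengthLE_of_abs_det_eq_one (n : ℕ) {a b c d : ℤ} (hdet : |a * d - b * c| = 1)
    (hsum : |a| + |b| + |c| + |d| ≤ n) :
    WordLengthLE gl2Generators !![a, b; c, d] (4 * n + 5) := by
  induction n generalizing a b c d with
  | zero => exact (wordLengthLE_of_sum_abs_le_two hdet (by omega)).mono (by omega)
  | succ n ih =>
    by_cases hsmall : |a| + |b| + |c| + |d| ≤ 2
    · exact (wordLengthLE_of_sum_abs_le_two hdet hsmall).mono (by omega)
    rcases le_total (|c| + |d|) (|a| + |b|) with hrow | hrow
    · obtain ⟨ε, hε, hlt⟩ := exists_abs_sub_add_abs_sub_lt hdet hrow (by omega)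
      have hM : !![a, b; c, d] = !![1, ε; 0, 1] * !![a - ε * c, b - ε * d; c, d] := by
        simp
      have hdet' : |(a - ε * c) * d - (b - ε * d) * c| = 1 := by rw [← hdet]; congr 1; ring
      rw [hM]
      exact ((wordLengthLE_upperShear hε).mul (ih hdet' (by push_cast at hsum; omega))).mono
        (by omega)
    · obtain ⟨ε, hε, hlt⟩ := exists_abs_sub_add_abs_sub_lt
        (by rwa [abs_sub_comm, mul_comm c, mul_comm d]) hrow (by omega)
      have hM : !![a, b; c, d] = !![1, 0; ε, 1] * !![a, b; c - ε * a, d - ε * b] := by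
        simp
      have hdet' : |a * (d - ε * b) - b * (c - ε * a)| = 1 := by rw [← hdet]; congr 1; ring
      rw [hM]
      exact ((wordLengthLE_lowerShear hε).mul (ih hdet' (by push_cast at hsum; omega))).mono
        (by omega)

theorem gl2z_word_length
    (A B C : Matrix (Fin 2) (Fin 2) ℤ)
    (hA : A = !![1, -1; 0, -1]) (hB : B = !![1, 0; 0, -1])
    (hC : C = !![0, 1; 1, 0]) :
    ∃ K : ℕ, ∀ a b c d : ℤ, ∀ M : Matrix (Fin 2) (Fin 2) ℤ,
      M = !![a, b; c, d] → (M.det = 1 ∨ M.det = -1) →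
      ∃ L : List (Matrix (Fin 2) (Fin 2) ℤ),
        (∀ Q ∈ L, Q = A ∨ Q = B ∨ Q = C ∨ Q = A⁻¹ ∨ Q = B⁻¹ ∨ Q = C⁻¹) ∧
        L.prod = M ∧
        (L.length : ℤ) ≤ K * (|a| + |b| + |c| + |d|) + K := by
  subst hA hB hC
  refine ⟨5, fun a b c d M hM hdet => ?_⟩
  subst hM
  have habs : |a * d - b * c| = 1 := by
    rw [det_fin_two_of] at hdet
    rcases hdet with h | h <;> simp [h]
  have hN : ((a.natAbs + b.natAbs + c.natAbs + d.natAbs : ℕ) : ℤ) = |a| + |b| + |c| + |d| := by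
    simp only [Nat.cast_add, Int.natCast_natAbs]
  obtain ⟨L, hL, hprod, hlen⟩ := wordLengthLE_of_abs_det_eq_one _ habs hN.ge
  refine ⟨L, fun Q hQ => ?_, hprod, ?_⟩
  · rcases hL Q hQ with h | h | h
    exacts [.inl h, .inr (.inl h), .inr (.inr (.inl h))]
  · have hlen' : (L.length : ℤ) ≤ 4 * (|a| + |b| + |c| + |d|) + 5 := by
      rw [← hN]
      exact_mod_cast hlen
    push_cast
    linarith [abs_nonneg a, abs_nonneg b, abs_nonneg c, abs_nonneg d]
end

section
/- Let G act on a tree T without inversions. If every element of G acting on T fixes no vertex (the action is free), then G is a free group. -/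
/-!
Consider the groupoid whose objects are the vertex orbits and in which every hom-set is `G`, a
morphism `g : a ⟶ b` standing for the orbit of the vertex pair `(rep b, g • rep a)`; for a free
action it is equivalent to the fundamental groupoid of `T / G`. Orient every edge orbit arbitrarily. This groupoid is free on the oriented edge orbits:
functors to a group `X` are the `G`-invariant `X`-valued cocycles on the vertices, and since `T` is
a tree, a cocycle is the same as an antisymmetric labelling of the edges (take products along
paths). The groupoid is connected with vertex group `G`, so `G` is free by the Nielsen–Schreier
theorem for free groupoids.
-/

open CategoryTheory MulAction

universe u v w

section Cocycle

variable {V : Type*} {X : Type*} [Group X]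

def IsCocycle (Φ : V → V → X) : Prop := ∀ u v w, Φ u v * Φ v w = Φ u w

lemma IsCocycle.self_eq_one {Φ : V → V → X} (hΦ : IsCocycle Φ) (u : V) : Φ u u = 1 :=
  mul_eq_left.mp (hΦ u u u)

end Cocycle

namespace SimpleGraph

variable {V : Type*} {X : Type*} [Group X] {T : SimpleGraph V}

def Walk.labelProd (ℓ : V → V → X) {u v : V} (p : T.Walk u v) : X :=
  (p.darts.map fun d => ℓ d.fst d.snd).prod

namespace Walk

variable (ℓ : V → V → X)

@[simp] lemma labelProd_nil {u : V} : (nil : T.Walk u u).labelProd ℓ = 1 := rfl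

@[simp] lemma labelProd_cons {u v w : V} (h : T.Adj u v) (p : T.Walk v w) :
    (cons h p).labelProd ℓ = ℓ u v * p.labelProd ℓ := rfl

lemma labelProd_append {u v w : V} (p : T.Walk u v) (q : T.Walk v w) :
    (p.append q).labelProd ℓ = p.labelProd ℓ * q.labelProd ℓ := by
  simp [labelProd, darts_append]

lemma labelProd_congr {ℓ' : V → V → X} (h : ∀ u v, T.Adj u v → ℓ u v = ℓ' u v) {u v : V}
    (p : T.Walk u v) : p.labelProd ℓ = p.labelProd ℓ' := by
  induction p with
  | nil => rfl
  | cons hadj p ih => simp [ih, h _ _ hadj]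

end Walk

lemma _root_.IsCocycle.eq_labelProd {Φ : V → V → X} (hΦ : IsCocycle Φ) {u v : V} (p : T.Walk u v) :
    Φ u v = p.labelProd Φ := by
  induction p with
  | nil => exact hΦ.self_eq_one _
  | @cons u w v _ p ih => rw [Walk.labelProd_cons, ← ih, hΦ]

lemma _root_.IsCocycle.eq_of_adj (hT : T.Preconnected) {Φ Ψ : V → V → X} (hΦ : IsCocycle Φ)
    (hΨ : IsCocycle Ψ) (h : ∀ u v, T.Adj u v → Φ u v = Ψ u v) : Φ = Ψ := by
  ext u v
  obtain ⟨p⟩ := hT u v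
  rw [hΦ.eq_labelProd p, hΨ.eq_labelProd p, Walk.labelProd_congr _ h]

variable {ℓ : V → V → X}

lemma IsAcyclic.eq_of_isPath (hT : T.IsAcyclic) {u v : V} {p q : T.Walk u v} (hp : p.IsPath)
    (hq : q.IsPath) : p = q :=
  congrArg Subtype.val ((hT.subsingleton_path u v).elim ⟨p, hp⟩ ⟨q, hq⟩)

lemma IsAcyclic.labelProd_eq_of_isPath (hT : T.IsAcyclic)
    (hℓ : ∀ u v, T.Adj u v → ℓ v u = (ℓ u v)⁻¹) {u v : V} (p q : T.Walk u v) (hq : q.IsPath) :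
    p.labelProd ℓ = q.labelProd ℓ := by
  classical
  induction p with
  | nil => rw [hT.eq_of_isPath hq .nil]
  | @cons u w v h p ih =>
    rw [Walk.labelProd_cons, ih _ p.bypass_isPath]
    set r := p.bypass
    by_cases hu : u ∈ r.support
    · -- by acyclicity, a path from `w` to `v` through `u` starts with the edge `w u`
      have hfirst : r.takeUntil u hu = .cons h.symm .nil :=
        hT.eq_of_isPath (p.bypass_isPath.takeUntil hu) (Walk.IsPath.of_adj h.symm)
      have hrest : r.dropUntil u hu = q := hT.eq_of_isPath (p.bypass_isPath.dropUntil hu) hq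
      rw [← r.take_spec hu, Walk.labelProd_append, hfirst, hrest, Walk.labelProd_cons,
        Walk.labelProd_nil, mul_one, hℓ _ _ h, mul_inv_cancel_left]
    · rw [← Walk.labelProd_cons _ h, hT.eq_of_isPath (p.bypass_isPath.cons hu) hq]

lemma IsAcyclic.labelProd_eq (hT : T.IsAcyclic) (hℓ : ∀ u v, T.Adj u v → ℓ v u = (ℓ u v)⁻¹)
    {u v : V} (p q : T.Walk u v) : p.labelProd ℓ = q.labelProd ℓ := by
  classical
  rw [hT.labelProd_eq_of_isPath hℓ p _ q.bypass_isPath,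
    hT.labelProd_eq_of_isPath hℓ q _ q.bypass_isPath]

lemma IsTree.exists_isCocycle (hT : T.IsTree) (hℓ : ∀ u v, T.Adj u v → ℓ v u = (ℓ u v)⁻¹) :
    ∃ Φ : V → V → X, IsCocycle Φ ∧ ∀ u v, T.Adj u v → Φ u v = ℓ u v := by
  let path (u v : V) : T.Walk u v := (hT.connected.preconnected u v).some
  refine ⟨fun u v => (path u v).labelProd ℓ, fun u v w => ?_, fun u v h => ?_⟩
  · rw [← Walk.labelProd_append, hT.isAcyclic.labelProd_eq hℓ]
  · change (path u v).labelProd ℓ = ℓ u v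
    rw [hT.isAcyclic.labelProd_eq hℓ _ (.cons h .nil), Walk.labelProd_cons,
      Walk.labelProd_nil, mul_one]

end SimpleGraph

/-- Objects and morphisms are lifted to a common universe, as
`IsFreeGroupoid.endIsFreeOfConnectedFree` requires. -/
def OrbitGroupoid (G : Type u) (V : Type v) [Group G] [MulAction G V] : Type max u v :=
  ULift.{u} (orbitRel.Quotient G V)

namespace OrbitGroupoid

noncomputable section

section Basic

variable {G : Type u} {V : Type v} [Group G] [MulAction G V]

instance : Groupoid (OrbitGroupoid G V) where
  Hom _ _ := ULift.{v} G
  id _ := ⟨1⟩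
  comp f g := ⟨g.down * f.down⟩
  id_comp _ := congrArg ULift.up (mul_one _)
  comp_id _ := congrArg ULift.up (one_mul _)
  assoc _ _ _ := congrArg ULift.up (mul_assoc _ _ _).symm
  inv f := ⟨f.down⁻¹⟩
  inv_comp _ := congrArg ULift.up (mul_inv_cancel _)
  comp_inv _ := congrArg ULift.up (inv_mul_cancel _)

variable (G) in
def mk (x : V) : OrbitGroupoid G V := ⟨Quotient.mk _ x⟩

def rep (a : OrbitGroupoid G V) : V := a.down.out

def hom {a b : OrbitGroupoid G V} (g : G) : a ⟶ b := ⟨g⟩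

@[simp] lemma mk_rep (a : OrbitGroupoid G V) : mk G (rep a) = a :=
  congrArg ULift.up (Quotient.out_eq a.down)

@[simp] lemma mk_smul (g : G) (x : V) : mk G (g • x) = mk G x :=
  congrArg ULift.up (Quotient.sound (mem_orbit _ _))

lemma exists_smul_rep_mk (x : V) : ∃ g : G, g • rep (mk G x) = x := by
  obtain ⟨g, hg⟩ := Quotient.mk_out (s := orbitRel G V) x
  exact ⟨g⁻¹, by rw [inv_smul_eq_iff]; exact hg.symm⟩

variable (G) in
def transporter (x : V) : G := (exists_smul_rep_mk x).choose

lemma transporter_smul_rep (x : V) : transporter G x • rep (mk G x) = x :=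
  (exists_smul_rep_mk x).choose_spec

lemma rep_mk (x : V) : rep (mk G x) = (transporter G x)⁻¹ • x := by
  rw [eq_inv_smul_iff, transporter_smul_rep]

variable (hfree : ∀ g : G, g ≠ 1 → ∀ x : V, g • x ≠ x)
include hfree

lemma eq_of_smul_eq_smul {g h : G} {x : V} (e : g • x = h • x) : g = h := by
  by_contra hne
  exact hfree (h⁻¹ * g) (fun h1 => hne (inv_mul_eq_one.mp h1).symm) x
    (by rw [mul_smul, e, inv_smul_smul])

lemma transporter_smul (g : G) (x : V) : transporter G (g • x) = g * transporter G x :=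
  eq_of_smul_eq_smul hfree (x := rep (mk G x)) <| by
    rw [mul_smul, transporter_smul_rep, ← mk_smul g, transporter_smul_rep]

lemma transporter_rep (a : OrbitGroupoid G V) : transporter G (rep a) = 1 :=
  eq_of_smul_eq_smul hfree (x := rep a) <| by
    simpa only [mk_rep, one_smul] using transporter_smul_rep (G := G) (rep a)

end Basic

section Functors

variable {G : Type u} {V : Type v} [Group G] [MulAction G V] {X : Type w} [Group X]
variable (E : OrbitGroupoid G V ⥤ SingleObj X)

lemma map_hom_congr {a a' b b' : OrbitGroupoid G V} (ha : a = a') (hb : b = b') (g : G) :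
    E.map (hom g : a ⟶ b) = E.map (hom g : a' ⟶ b') := by
  subst ha hb; rfl

lemma map_hom_mul {a b c : OrbitGroupoid G V} (g h : G) :
    E.map (hom (h * g) : a ⟶ c) = E.map (hom h : b ⟶ c) * E.map (hom g : a ⟶ b) :=
  (E.map_comp (hom g : a ⟶ b) (hom h : b ⟶ c)).trans (SingleObj.comp_as_mul _ _ _)

lemma map_hom_inv {a b : OrbitGroupoid G V} (g : G) :
    E.map (hom g⁻¹ : b ⟶ a) = (E.map (hom g : a ⟶ b))⁻¹ := by
  refine eq_inv_of_mul_eq_one_left ?_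
  rw [← map_hom_mul, inv_mul_cancel]
  exact E.map_id a

def cocycleOfFunctor (x y : V) : X :=
  E.map (hom ((transporter G x)⁻¹ * transporter G y) : mk G y ⟶ mk G x)

lemma isCocycle_cocycleOfFunctor : IsCocycle (cocycleOfFunctor E) := by
  intro x y z
  rw [cocycleOfFunctor, cocycleOfFunctor, cocycleOfFunctor, ← map_hom_mul]
  group

lemma map_eq_cocycleOfFunctor (hfree : ∀ g : G, g ≠ 1 → ∀ x : V, g • x ≠ x)
    {a b : OrbitGroupoid G V} (m : a ⟶ b) :
    E.map m = cocycleOfFunctor E (rep b) (m.down • rep a) := by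
  rw [cocycleOfFunctor, transporter_smul hfree, transporter_rep hfree, transporter_rep hfree,
    inv_one, one_mul, mul_one, map_hom_congr E (mk_smul _ _) (mk_rep b), mk_rep]
  rfl

variable {Φ : V → V → X}

def functorOfCocycle (hΦ : IsCocycle Φ) (hinv : ∀ (g : G) x y, Φ (g • x) (g • y) = Φ x y) :
    OrbitGroupoid G V ⥤ SingleObj X where
  obj _ := SingleObj.star X
  map {a b} m := Φ (rep b) (m.down • rep a)
  map_id a := by
    change Φ (rep a) ((1 : G) • rep a) = 1
    rw [one_smul, hΦ.self_eq_one]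
  map_comp {a b c} m n := by
    change Φ (rep c) ((n.down * m.down) • rep a) =
      Φ (rep c) (n.down • rep b) * Φ (rep b) (m.down • rep a)
    rw [mul_smul, ← hinv n.down (rep b), hΦ]

lemma eq_functorOfCocycle (hfree : ∀ g : G, g ≠ 1 → ∀ x : V, g • x ≠ x) (hΦ : IsCocycle Φ)
    (hinv : ∀ (g : G) x y, Φ (g • x) (g • y) = Φ x y) (h : cocycleOfFunctor E = Φ) :
    E = functorOfCocycle hΦ hinv :=
  CategoryTheory.Functor.ext (fun _ => rfl) fun a b m => by
    rw [map_eq_cocycleOfFunctor E hfree, h]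
    simp only [eqToHom_refl, Category.id_comp, Category.comp_id]
    rfl

end Functors

section Generators

variable {G : Type u} {V : Type v} [Group G] [MulAction G V] (T : SimpleGraph V)

variable (G V) in
/-- `(a, b, g)` encodes the morphism `hom g : a ⟶ b`; unlike morphisms, these can be compared
across different endpoints. -/
abbrev Triple : Type max u v := OrbitGroupoid G V × OrbitGroupoid G V × G

def Triple.reverse (t : Triple G V) : Triple G V := (t.2.1, t.1, t.2.2⁻¹)

def IsEdge (t : Triple G V) : Prop := T.Adj (rep t.2.1) (t.2.2 • rep t.1)

/-- An arbitrary well-order chooses one orientation of each edge orbit. -/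
def IsGenerator (t : Triple G V) : Prop := IsEdge T t ∧ WellOrderingRel t t.reverse

def Generator (a b : OrbitGroupoid G V) : Type max u v :=
  {m : a ⟶ b // IsGenerator T (a, b, m.down)}

variable (G) in
def edgeTriple (x y : V) : Triple G V :=
  (mk G y, mk G x, (transporter G x)⁻¹ * transporter G y)

variable {T}

lemma edgeTriple_swap (x y : V) : edgeTriple G y x = (edgeTriple G x y).reverse := by
  simp [edgeTriple, Triple.reverse]

lemma reverse_ne (hnoinv : ∀ (g : G) (x y : V), T.Adj x y → ¬(g • x = y ∧ g • y = x))
    {t : Triple G V} (ht : IsEdge T t) : t.reverse ≠ t := by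
  obtain ⟨a, b, g⟩ := t
  intro h
  simp only [Triple.reverse, Prod.mk.injEq] at h
  obtain ⟨rfl, -, hg⟩ := h
  exact hnoinv g (rep b) (g • rep b) ht
    ⟨rfl, by rw [smul_smul, mul_eq_one_iff_eq_inv.mpr hg.symm, one_smul]⟩

variable (hadj : ∀ (g : G) (x y : V), T.Adj x y → T.Adj (g • x) (g • y))
include hadj

lemma adj_smul_iff (g : G) (x y : V) : T.Adj (g • x) (g • y) ↔ T.Adj x y :=
  ⟨fun h => by simpa using hadj g⁻¹ _ _ h, hadj g x y⟩

lemma isEdge_reverse (t : Triple G V) : IsEdge T t.reverse ↔ IsEdge T t := by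
  simp only [IsEdge, Triple.reverse]
  rw [← adj_smul_iff hadj t.2.2, smul_inv_smul]
  exact T.adj_comm _ _

lemma isEdge_edgeTriple (x y : V) : IsEdge T (edgeTriple G x y) ↔ T.Adj x y := by
  rw [IsEdge, edgeTriple, rep_mk, rep_mk, mul_smul, smul_inv_smul, adj_smul_iff hadj]

lemma isGenerator_reverse_iff
    (hnoinv : ∀ (g : G) (x y : V), T.Adj x y → ¬(g • x = y ∧ g • y = x)) {t : Triple G V}
    (ht : IsEdge T t) :
    IsGenerator T t.reverse ↔ ¬ IsGenerator T t := by
  have hrev : t.reverse.reverse = t := by simp [Triple.reverse]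
  rw [IsGenerator, IsGenerator, isEdge_reverse hadj, hrev, and_iff_right ht, and_iff_right ht]
  rcases trichotomous_of WellOrderingRel t t.reverse with h | h | h
  · exact iff_of_false (asymm h) (not_not.mpr h)
  · exact absurd h.symm (reverse_ne hnoinv ht)
  · exact iff_of_true h (asymm h)

end Generators

section UniversalProperty

variable {G : Type u} {V : Type v} [Group G] [MulAction G V] {T : SimpleGraph V}

lemma edgeTriple_smul (hfree : ∀ g : G, g ≠ 1 → ∀ x : V, g • x ≠ x) (g : G) (x y : V) :
    edgeTriple G (g • x) (g • y) = edgeTriple G x y := by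
  simp only [edgeTriple, mk_smul, transporter_smul hfree, mul_inv_rev, mul_assoc,
    inv_mul_cancel_left]

lemma edgeTriple_rep_smul (hfree : ∀ g : G, g ≠ 1 → ∀ x : V, g • x ≠ x)
    (a b : OrbitGroupoid G V) (g : G) : edgeTriple G (rep b) (g • rep a) = (a, b, g) := by
  simp only [edgeTriple, mk_smul, mk_rep, transporter_smul hfree, transporter_rep hfree, inv_one,
    one_mul, mul_one]

variable {X : Type w} [Group X] (f : ∀ ⦃a b : OrbitGroupoid G V⦄, Generator T a b → X)

open scoped Classical in
def extendLabel (t : Triple G V) : X :=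
  if h : IsGenerator T t then @f t.1 t.2.1 ⟨hom t.2.2, h⟩
  else if h' : IsGenerator T t.reverse then (@f t.2.1 t.1 ⟨hom t.2.2⁻¹, h'⟩)⁻¹
  else 1

lemma extendLabel_of_isGenerator {a b : OrbitGroupoid G V} {g : G} (h : IsGenerator T (a, b, g)) :
    extendLabel f (a, b, g) = f ⟨hom g, h⟩ :=
  dif_pos h

variable (hadj : ∀ (g : G) (x y : V), T.Adj x y → T.Adj (g • x) (g • y))
  (hnoinv : ∀ (g : G) (x y : V), T.Adj x y → ¬(g • x = y ∧ g • y = x))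
include hadj hnoinv

lemma extendLabel_reverse {t : Triple G V} (ht : IsEdge T t) :
    extendLabel f t.reverse = (extendLabel f t)⁻¹ := by
  obtain ⟨a, b, g⟩ := t
  by_cases h : IsGenerator T (a, b, g)
  · have h' : ¬ IsGenerator T (b, a, g⁻¹) :=
      (isGenerator_reverse_iff hadj hnoinv ht).not.mpr (not_not.mpr h)
    simp [extendLabel, Triple.reverse, h, h']
  · have h' : IsGenerator T (b, a, g⁻¹) := (isGenerator_reverse_iff hadj hnoinv ht).mpr h
    simp [extendLabel, Triple.reverse, h, h']

lemma map_hom_eq_extendLabel (E : OrbitGroupoid G V ⥤ SingleObj X)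
    (hE : ∀ a b (m : Generator T a b), E.map m.1 = f m) {a b : OrbitGroupoid G V} {g : G}
    (hg : IsEdge T (a, b, g)) : E.map (hom g : a ⟶ b) = extendLabel f (a, b, g) := by
  by_cases h : IsGenerator T (a, b, g)
  · rw [extendLabel_of_isGenerator f h]
    exact hE a b ⟨hom g, h⟩
  · have h' := (isGenerator_reverse_iff hadj hnoinv hg).mpr h
    rw [extendLabel, dif_neg h, dif_pos h']
    calc E.map (hom g : a ⟶ b) = (E.map (hom g⁻¹ : b ⟶ a))⁻¹ := by rw [map_hom_inv, inv_inv]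
      _ = _ := congrArg (·⁻¹) (hE b a ⟨hom g⁻¹, h'⟩)

variable (hfree : ∀ g : G, g ≠ 1 → ∀ x : V, g • x ≠ x)
include hfree

theorem exists_unique_lift (hT : T.IsTree) :
    ∃! F : OrbitGroupoid G V ⥤ SingleObj X, ∀ a b (m : Generator T a b), F.map m.1 = f m := by
  set ℓ : V → V → X := fun x y => extendLabel f (edgeTriple G x y)
  have hℓ : ∀ x y, T.Adj x y → ℓ y x = (ℓ x y)⁻¹ := fun x y h => by
    change extendLabel f (edgeTriple G y x) = (extendLabel f (edgeTriple G x y))⁻¹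
    rw [edgeTriple_swap]
    exact extendLabel_reverse f hadj hnoinv ((isEdge_edgeTriple hadj x y).mpr h)
  obtain ⟨Φ, hΦ, hΦℓ⟩ := hT.exists_isCocycle hℓ
  -- the translate of `Φ` by `g` is a cocycle with the same values on edges
  have hinv : ∀ (g : G) x y, Φ (g • x) (g • y) = Φ x y := fun g => congrFun₂ <|
    IsCocycle.eq_of_adj hT.connected.preconnected (fun x y z => hΦ _ _ _) hΦ fun x y h => by
      simp only [hΦℓ _ _ h, hΦℓ _ _ (hadj g x y h), ℓ, edgeTriple_smul hfree]
  refine ⟨functorOfCocycle hΦ hinv, fun a b m => ?_,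
    fun E hE => eq_functorOfCocycle E hfree hΦ hinv ?_⟩
  · change Φ (rep b) (m.1.down • rep a) = f m
    rw [hΦℓ _ _ m.2.1]
    simp only [ℓ, edgeTriple_rep_smul hfree, extendLabel_of_isGenerator f m.2]
    rfl
  · refine IsCocycle.eq_of_adj hT.connected.preconnected (isCocycle_cocycleOfFunctor E) hΦ
      fun x y h => ?_
    rw [hΦℓ x y h]
    exact map_hom_eq_extendLabel f hadj hnoinv E hE ((isEdge_edgeTriple hadj x y).mpr h)

end UniversalProperty

variable {G : Type u} {V : Type v} [Group G] [MulAction G V]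

abbrev isFreeGroupoid {T : SimpleGraph V} (hT : T.IsTree)
    (hadj : ∀ (g : G) (x y : V), T.Adj x y → T.Adj (g • x) (g • y))
    (hnoinv : ∀ (g : G) (x y : V), T.Adj x y → ¬(g • x = y ∧ g • y = x))
    (hfree : ∀ g : G, g ≠ 1 → ∀ x : V, g • x ≠ x) : IsFreeGroupoid (OrbitGroupoid G V) where
  quiverGenerators := ⟨Generator T⟩
  of m := m.1
  unique_lift f := exists_unique_lift f hadj hnoinv hfree hT

instance [Nonempty V] : IsConnected (OrbitGroupoid G V) :=
  have : Nonempty (OrbitGroupoid G V) := ⟨mk G (Classical.arbitrary V)⟩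
  zigzag_isConnected fun _ _ => .single (Or.inl ⟨hom 1⟩)

def endMulEquiv (a : OrbitGroupoid G V) : End a ≃* G where
  toFun m := ULift.down (α := G) m
  invFun g := (hom g : a ⟶ a)
  left_inv _ := rfl
  right_inv _ := rfl
  map_mul' _ _ := rfl

end

end OrbitGroupoid

theorem free_action_on_tree_implies_free
    (G : Type*) [Group G] (V : Type*) (T : SimpleGraph V) (hT : T.IsTree)
    [MulAction G V]
    (hadj : ∀ (g : G) (u v : V), T.Adj u v → T.Adj (g • u) (g • v))
    (hnoinv : ∀ (g : G) (u v : V), T.Adj u v → ¬(g • u = v ∧ g • v = u))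
    (hfree : ∀ g : G, g ≠ 1 → ∀ v : V, g • v ≠ v) :
    IsFreeGroup G := by
  have := OrbitGroupoid.isFreeGroupoid hT hadj hnoinv hfree
  have : Nonempty V := hT.connected.nonempty
  exact IsFreeGroup.ofMulEquiv
    (OrbitGroupoid.endMulEquiv (OrbitGroupoid.mk G (Classical.arbitrary V)))
end

section
/- For integers a, c with a > 0, the Euclidean algorithm applied to the pair (a, c) via repeated division c = q·a + r with 0 ≤ r < a terminates, and the total sum of all quotients q occurring during the algorithm is at most a + c. -/
/-!
A step `(a, c) ↦ (r, a)` with `c = q * a + r` lowers `a + c` by at least `q`, because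
`q + r ≤ q * a + r = c`. So the quotients add up to at most the initial value of `a + c`.
-/

/-- Sum of the quotients occurring in the Euclidean algorithm applied to `(a, c)`,
where at each step `c = q * a + r` with `0 ≤ r < a` and `(a, c)` is replaced by `(r, a)`. -/
def quotSum : ℕ → ℕ → ℕ
  | 0, _ => 0
  | (a + 1), c => c / (a + 1) + quotSum (c % (a + 1)) (a + 1)
  decreasing_by exact Nat.mod_lt _ (Nat.succ_pos a)

theorem Nat.div_add_mod_le_self (n k : ℕ) : n / k + n % k ≤ n := by
  rcases Nat.eq_zero_or_pos k with rfl | hk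
  · simp
  · calc n / k + n % k ≤ k * (n / k) + n % k := by
          gcongr; exact Nat.le_mul_of_pos_left _ hk
      _ = n := Nat.div_add_mod n k

theorem euclid_quotient_sum_general (a c : ℕ) : quotSum a c ≤ a + c := by
  induction a, c using quotSum.induct with
  | case1 c => simp [quotSum]
  | case2 a c ih =>
    rw [quotSum]
    have hstep := Nat.div_add_mod_le_self c (a + 1)
    omega

theorem euclid_quotient_sum (a c : ℕ) (ha : 0 < a) : quotSum a c ≤ a + c :=
  euclid_quotient_sum_general a c
end
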